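/- arXiv:1008.4431 — 4 statements merged into one kernel-verified Lean document; each statement's English description precedes it below -/
import Mathlib

section
/- Let a be a positive irrational real number, and suppose there exist rational numbers b and c with a² + b·a + c = 0 such that the conjugate root ā = −b − a satisfies ā > a. Then there exist positive integers M, C, D, each divisible by 4, such that M² − C·D > 0 and a = (M − √(M² − C·D))/C. -/
/-!
Both roots `a < ā` are positive, so `b < 0 < c`. Scaling `x² + b x + c` by `C = 8·den(b)·den(c)`
gives an integral form `C x² - 2M x + D` with positive coefficients divisible by `4`, and its
smaller root is `a = (M - √(M² - C D)) / C` because `M² - C D = (M - C a)²` with `M - C a > 0`.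
-/

theorem eq_sub_sqrt_div_of_quadratic {M C D x : ℝ} (hC : 0 < C)
    (hx : C * x ^ 2 - 2 * M * x + D = 0) (hlt : C * x < M) :
    0 < M ^ 2 - C * D ∧ x = (M - √(M ^ 2 - C * D)) / C := by
  have hdisc : M ^ 2 - C * D = (M - C * x) ^ 2 := by linear_combination (-C) * hx
  have hroot : 0 < M - C * x := sub_pos.2 hlt
  refine ⟨hdisc ▸ pow_pos hroot 2, ?_⟩
  rw [hdisc, Real.sqrt_sq hroot.le]
  field_simp
  ring

theorem Rat.exists_pos_nat_eq_mul_den {q : ℚ} (hq : 0 < q) :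
    ∃ n : ℕ, 0 < n ∧ (n : ℚ) = q * q.den := by
  have hnum : 0 < q.num := Rat.num_pos.2 hq
  refine ⟨q.num.toNat, by omega, ?_⟩
  rw [Rat.mul_den_eq_num, ← Int.toNat_of_nonneg hnum.le]
  rfl

theorem quadratic_irrational_as_mu_general (a : ℝ) (ha : 0 < a) (b c : ℚ)
    (heq : a ^ 2 + (b : ℝ) * a + (c : ℝ) = 0) (hconj : -(b : ℝ) - a > a) :
    ∃ M C D : ℕ, 0 < M ∧ 0 < C ∧ 0 < D ∧ 4 ∣ M ∧ 4 ∣ C ∧ 4 ∣ D ∧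
      0 < (M : ℝ) ^ 2 - (C : ℝ) * (D : ℝ) ∧
      a = ((M : ℝ) - Real.sqrt ((M : ℝ) ^ 2 - (C : ℝ) * (D : ℝ))) / (C : ℝ) := by
  have hb : b < 0 := by exact_mod_cast (by linarith : (b : ℝ) < 0)
  -- `c = a ā` by Vieta
  have hc : 0 < c := by exact_mod_cast (by nlinarith : (0 : ℝ) < c)
  obtain ⟨m, hm, hm_eq⟩ := Rat.exists_pos_nat_eq_mul_den (neg_pos.2 hb)
  obtain ⟨d, hd, hd_eq⟩ := Rat.exists_pos_nat_eq_mul_den hc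
  have hmR : (m : ℝ) = -b * b.den := by exact_mod_cast hm_eq
  have hdR : (d : ℝ) = c * c.den := by exact_mod_cast hd_eq
  have hC : (0 : ℝ) < 8 * b.den * c.den := by positivity
  have hroot := eq_sub_sqrt_div_of_quadratic (M := 4 * c.den * m) (D := 8 * b.den * d) (x := a) hC
    (by rw [hmR, hdR]; linear_combination (8 * b.den * c.den : ℝ) * heq)
    (by rw [hmR]; nlinarith)
  refine ⟨4 * c.den * m, 8 * b.den * c.den, 8 * b.den * d, by positivity, by positivity,
    by positivity, ⟨c.den * m, by ring⟩, ⟨2 * b.den * c.den, by ring⟩, ⟨2 * b.den * d, by ring⟩, ?_⟩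
  push_cast
  exact hroot

/-- If `a > 0` is irrational, satisfies a quadratic equation `a² + b·a + c = 0` over `ℚ`,
and its conjugate `ā = -b - a` satisfies `ā > a`, then `a` can be written as
`(M - √(M² - C·D))/C` for positive integers `M, C, D` all divisible by `4` with
`M² - C·D > 0`.  This is the arithmetic core of Proposition 2.4(3). -/
theorem quadratic_irrational_as_mu (a : ℝ) (ha : 0 < a) (hirr : Irrational a) (b c : ℚ)
    (heq : a ^ 2 + (b : ℝ) * a + (c : ℝ) = 0) (hconj : -(b : ℝ) - a > a) :
    ∃ M C D : ℕ, 0 < M ∧ 0 < C ∧ 0 < D ∧ 4 ∣ M ∧ 4 ∣ C ∧ 4 ∣ D ∧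
      0 < (M : ℝ) ^ 2 - (C : ℝ) * (D : ℝ) ∧
      a = ((M : ℝ) - Real.sqrt ((M : ℝ) ^ 2 - (C : ℝ) * (D : ℝ))) / (C : ℝ) :=
  quadratic_irrational_as_mu_general a ha b c heq hconj
end

section
/- Let f(r) = 4 − 3r − √(9r² − 15r + 7) and K = {(r, t) ∈ ℝ² : 0 ≤ r ≤ 1 and 0 ≤ t ≤ f(r)}. Then K is not the convex hull of any finite subset of ℝ²; in particular K is not a polygon. -/
/-!
The boundary function `f r = 4 - 3r - √(9r² - 15r + 7)` is strictly concave, because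
`√(9r² - 15r + 7) = ‖r • 3 + (-5/2 + (√3/2) i)‖` is the norm along a line in `ℂ` missing the
origin, and the triangle inequality in `ℂ` is strict for vectors not on a common ray.
Under a strictly concave graph every graph point is an extreme point, so `K` has infinitely many
extreme points `(r, f r)`, whereas the extreme points of the convex hull of `F` lie in `F`.
-/

open Set

theorem strictConvexOn_norm_smul_add {E : Type*} [NormedAddCommGroup E] [NormedSpace ℝ E]
    [StrictConvexSpace ℝ E] {u v : E} (huv : LinearIndependent ℝ ![u, v]) :
    StrictConvexOn ℝ univ fun t : ℝ => ‖t • u + v‖ := by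
  have hne (t : ℝ) : t • u + v ≠ 0 := fun h =>
    one_ne_zero (LinearIndependent.pair_iff.1 huv t 1 (by rwa [one_smul])).2
  refine ⟨convex_univ, fun x _ y _ hxy a b ha hb hab => ?_⟩
  have hcomb : (a • x + b • y) • u + v = a • (x • u + v) + b • (y • u + v) :=
    calc (a • x + b • y) • u + v = (a • x + b • y) • u + (a + b) • v := by rw [hab, one_smul]
      _ = a • (x • u + v) + b • (y • u + v) := by module
  have hray : ¬SameRay ℝ (a • (x • u + v)) (b • (y • u + v)) := by
    intro h
    obtain ⟨r₁, r₂, hr₁, -, heq⟩ :=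
      h.exists_pos (smul_ne_zero ha.ne' (hne x)) (smul_ne_zero hb.ne' (hne y))
    obtain ⟨hu, hv⟩ := LinearIndependent.pair_iff.1 huv (r₁ * a * x - r₂ * b * y)
      (r₁ * a - r₂ * b) (by rw [← sub_eq_zero] at heq; rw [← heq]; module)
    exact hxy (mul_left_cancel₀ (mul_pos hr₁ ha).ne' (by linear_combination hu - y * hv))
  calc ‖(a • x + b • y) • u + v‖ = ‖a • (x • u + v) + b • (y • u + v)‖ := by rw [hcomb]
    _ < ‖a • (x • u + v)‖ + ‖b • (y • u + v)‖ := norm_add_lt_of_not_sameRay hray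
    _ = a • ‖x • u + v‖ + b • ‖y • u + v‖ := by
      rw [norm_smul, norm_smul, Real.norm_of_nonneg ha.le, Real.norm_of_nonneg hb.le]; rfl

section ExtremePoints

variable {𝕜 E : Type*} [Field 𝕜] [LinearOrder 𝕜] [IsStrictOrderedRing 𝕜] [AddCommGroup E]
  [Module 𝕜 E] {s : Set E} {f : E → 𝕜} {A : Set (E × 𝕜)}

theorem StrictConcaveOn.mem_extremePoints (hf : StrictConcaveOn 𝕜 s f)
    (hA : ∀ p ∈ A, p.1 ∈ s ∧ p.2 ≤ f p.1) {x : E} (hx : (x, f x) ∈ A) :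
    (x, f x) ∈ A.extremePoints 𝕜 := by
  refine _root_.mem_extremePoints.2 ⟨hx, ?_⟩
  rintro p hp q hq ⟨a, b, ha, hb, hab, heq⟩
  obtain ⟨h₁, h₂⟩ := Prod.ext_iff.1 heq
  simp only [Prod.fst_add, Prod.snd_add, Prod.smul_fst, Prod.smul_snd, smul_eq_mul] at h₁ h₂
  obtain ⟨hps, hpf⟩ := hA p hp
  obtain ⟨hqs, hqf⟩ := hA q hq
  by_cases hpq : p.1 = q.1
  · have hp₁ : p.1 = x := by rw [← h₁, ← hpq, ← add_smul, hab, one_smul]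
    rw [hp₁] at hpf
    rw [← hpq, hp₁] at hqf
    have hsum : a * (f x - p.2) + b * (f x - q.2) = 0 := by linear_combination f x * hab - h₂
    obtain ⟨hp₂, hq₂⟩ := (add_eq_zero_iff_of_nonneg (mul_nonneg ha.le (sub_nonneg.2 hpf))
      (mul_nonneg hb.le (sub_nonneg.2 hqf))).1 hsum
    refine ⟨Prod.ext hp₁ ?_, Prod.ext (hpq ▸ hp₁) ?_⟩
    · exact (sub_eq_zero.1 ((mul_eq_zero.1 hp₂).resolve_left ha.ne')).symm
    · exact (sub_eq_zero.1 ((mul_eq_zero.1 hq₂).resolve_left hb.ne')).symm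
  · have hlt := hf.2 hps hqs hpq ha hb hab
    rw [h₁, smul_eq_mul, smul_eq_mul] at hlt
    linarith [mul_le_mul_of_nonneg_left hpf ha.le, mul_le_mul_of_nonneg_left hqf hb.le]

theorem StrictConcaveOn.infinite_extremePoints (hf : StrictConcaveOn 𝕜 s f) (hs : s.Infinite)
    (hA : ∀ p ∈ A, p.1 ∈ s ∧ p.2 ≤ f p.1) (hgraph : ∀ x ∈ s, (x, f x) ∈ A) :
    (A.extremePoints 𝕜).Infinite :=
  (hs.image fun _ _ _ _ h => congrArg Prod.fst h).mono
    (image_subset_iff.2 fun x hx => hf.mem_extremePoints hA (hgraph x hx))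

theorem ne_convexHull_of_infinite_extremePoints {A : Set E} (hA : (A.extremePoints 𝕜).Infinite)
    {F : Set E} (hF : F.Finite) : A ≠ convexHull 𝕜 F := by
  rintro rfl
  exact hA (hF.subset extremePoints_convexHull_subset)

end ExtremePoints

theorem sqrt_quadratic_eq_norm (r : ℝ) :
    √(9 * r ^ 2 - 15 * r + 7) = ‖r • (3 : ℂ) + ⟨-5 / 2, √3 / 2⟩‖ := by
  rw [Complex.norm_def, Complex.normSq_apply]
  congr 1
  simp only [Complex.real_smul, Complex.add_re, Complex.mul_re, Complex.ofReal_re, Complex.re_ofNat,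
    Complex.ofReal_im, Complex.im_ofNat, mul_zero, sub_zero, Complex.add_im, Complex.mul_im,
    zero_mul, add_zero, zero_add]
  linear_combination (-1 / 4 : ℝ) * Real.mul_self_sqrt (show (0 : ℝ) ≤ 3 by norm_num)

theorem strictConcaveOn_four_sub_three_mul_sub_sqrt :
    StrictConcaveOn ℝ univ fun r : ℝ => 4 - 3 * r - √(9 * r ^ 2 - 15 * r + 7) := by
  have hli : LinearIndependent ℝ ![(3 : ℂ), ⟨-5 / 2, √3 / 2⟩] := by
    refine LinearIndependent.pair_iff.2 fun s t h => ?_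
    have ht : t = 0 := by simpa using congrArg Complex.im h
    have hs : s * 3 = 0 := by simpa [ht] using congrArg Complex.re h
    exact ⟨by linarith, ht⟩
  have hsqrt := (strictConvexOn_norm_smul_add hli).congr fun r _ => (sqrt_quadratic_eq_norm r).symm
  have haffine : ConcaveOn ℝ univ fun r : ℝ => 4 - 3 * r :=
    ⟨convex_univ, fun x _ y _ a b _ _ hab =>
      le_of_eq (by simp only [smul_eq_mul]; linear_combination 4 * hab)⟩
  exact haffine.sub_strictConvexOn hsqrt

theorem four_sub_three_mul_sub_sqrt_nonneg {r : ℝ} (hr : r ≤ 1) :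
    0 ≤ 4 - 3 * r - √(9 * r ^ 2 - 15 * r + 7) := by
  have : √(9 * r ^ 2 - 15 * r + 7) ≤ 4 - 3 * r := Real.sqrt_le_iff.2 ⟨by linarith, by nlinarith⟩
  linarith

/-- The region `K = {(r, t) : 0 ≤ r ≤ 1, 0 ≤ t ≤ 4 - 3r - √(9r² - 15r + 7)}` is not the
convex hull of any finite subset of `ℝ²`; in particular it is not a polygon. -/
theorem K_not_polyhedral :
    ∀ F : Set (ℝ × ℝ), F.Finite →
      {p : ℝ × ℝ | 0 ≤ p.1 ∧ p.1 ≤ 1 ∧ 0 ≤ p.2 ∧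
          p.2 ≤ 4 - 3 * p.1 - Real.sqrt (9 * p.1 ^ 2 - 15 * p.1 + 7)} ≠
        convexHull ℝ F := by
  intro F hF
  have hf := strictConcaveOn_four_sub_three_mul_sub_sqrt.subset (subset_univ _) (convex_Icc 0 1)
  refine ne_convexHull_of_infinite_extremePoints ?_ hF
  refine hf.infinite_extremePoints (Icc_infinite zero_lt_one) ?_ ?_
  · rintro p ⟨h₀, h₁, -, hp⟩
    exact ⟨⟨h₀, h₁⟩, hp⟩
  · rintro r ⟨h₀, h₁⟩
    exact ⟨h₀, h₁, four_sub_three_mul_sub_sqrt_nonneg h₁, le_rfl⟩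
end

section
/- Let f(r) = 4 − 3r − √(9r² − 15r + 7) and Δ = {(r, t, y) ∈ ℝ³ : 0 ≤ r ≤ 1, 0 ≤ t ≤ f(r), 0 ≤ y ≤ 24 − 18r − 6t}. Then for every r ∈ (0, 1), the point (r, f(r), 0) is an extreme point of the convex set Δ. -/
/-!
The function `r ↦ √(9r² - 15r + 7)` is strictly convex (its radicand is a positive definite
quadratic), so `f(r) = 4 - 3r - √(9r² - 15r + 7)` is strictly concave. A point on the graph of a
strictly concave function is extreme in its hypograph, so `(r, f r, 0)` is extreme in
`hypograph f × [0, ∞)`. Up to reassociating the product, this set contains `Δ`, and for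
`0 < r < 1` the point lies in `Δ`, hence is extreme there too.
-/

open Set

section ExtremePoints

variable {𝕜 E : Type*} [Field 𝕜] [LinearOrder 𝕜] [IsStrictOrderedRing 𝕜]

theorem self_mem_extremePoints_Ici (a : 𝕜) : a ∈ extremePoints 𝕜 (Ici a) := by
  refine ⟨self_mem_Ici, fun x₁ hx₁ x₂ hx₂ ⟨α, β, hα, hβ, hαβ, h⟩ ↦ ?_⟩
  simp only [smul_eq_mul, mem_Ici] at h hx₁ hx₂
  have hsum : α * (x₁ - a) + β * (x₂ - a) = 0 := by linear_combination h - a * hαβ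
  refine le_antisymm (not_lt.1 fun hlt ↦ ?_) hx₁
  linarith [mul_pos hα (sub_pos.2 hlt), mul_nonneg hβ.le (sub_nonneg.2 hx₂)]

theorem self_mem_extremePoints_Iic (a : 𝕜) : a ∈ extremePoints 𝕜 (Iic a) := by
  refine ⟨self_mem_Iic, fun x₁ hx₁ x₂ hx₂ ⟨α, β, hα, hβ, hαβ, h⟩ ↦ neg_inj.1 ?_⟩
  refine (self_mem_extremePoints_Ici (-a)).2 (neg_le_neg hx₁) (neg_le_neg hx₂)
    ⟨α, β, hα, hβ, hαβ, ?_⟩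
  simp only [smul_eq_mul] at h ⊢
  linear_combination -h

variable [AddCommGroup E] [Module 𝕜 E]

theorem StrictConcaveOn.mk_mem_extremePoints_hypograph {s : Set E} {f : E → 𝕜}
    (hf : StrictConcaveOn 𝕜 s f) {x : E} (hx : x ∈ s) :
    (x, f x) ∈ extremePoints 𝕜 {p : E × 𝕜 | p.1 ∈ s ∧ p.2 ≤ f p.1} := by
  refine ⟨⟨hx, le_rfl⟩, ?_⟩
  rintro ⟨x₁, t₁⟩ ⟨hx₁, ht₁⟩ ⟨x₂, t₂⟩ ⟨hx₂, ht₂⟩ ⟨a, b, ha, hb, hab, hp⟩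
  simp only [Prod.smul_mk, Prod.mk_add_mk, Prod.mk.injEq, smul_eq_mul] at hp ht₁ ht₂
  obtain ⟨rfl, hft⟩ := hp
  obtain rfl : x₁ = x₂ := by
    by_contra hne
    have hlt := hf.2 hx₁ hx₂ hne ha hb hab
    simp only [smul_eq_mul] at hlt
    linarith [mul_le_mul_of_nonneg_left ht₁ ha.le, mul_le_mul_of_nonneg_left ht₂ hb.le]
  rw [Convex.combo_self hab] at hft ⊢
  rw [(self_mem_extremePoints_Iic (f x₁)).2 ht₁ ht₂ ⟨a, b, ha, hb, hab, hft⟩]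

end ExtremePoints

theorem strictConvexOn_sqrt_quadratic {a b c : ℝ} (ha : 0 < a) (hdisc : b ^ 2 < 4 * a * c) :
    StrictConvexOn ℝ univ fun x ↦ √(a * x ^ 2 + b * x + c) := by
  set q : ℝ → ℝ := fun x ↦ a * x ^ 2 + b * x + c
  have hq : ∀ x, 0 < q x := fun x ↦ by nlinarith [sq_nonneg (2 * a * x + b)]
  refine ⟨convex_univ, fun x _ y _ hxy μ ν hμ hν hμν ↦ ?_⟩
  -- `B` is the polar form of `q` at `(x, 1), (y, 1)`, and `hgram` is their Gram determinant.
  set B := a * x * y + b * (x + y) / 2 + c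
  have hB : B < √(q x) * √(q y) := by
    rw [← Real.sqrt_mul (hq x).le]
    refine Real.lt_sqrt_of_sq_lt ?_
    have hgram : q x * q y - B ^ 2 = (a * c - b ^ 2 / 4) * (x - y) ^ 2 := by
      simp only [q, B]; ring
    have : 0 < (x - y) ^ 2 := by have := sub_ne_zero.2 hxy; positivity
    nlinarith
  have hsplit : q (μ * x + ν * y) = μ ^ 2 * q x + ν ^ 2 * q y + 2 * μ * ν * B := by
    obtain rfl : ν = 1 - μ := by linarith
    simp only [q, B]; ring
  have hpos : 0 < μ * √(q x) + ν * √(q y) := by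
    have := Real.sqrt_pos.2 (hq x); have := Real.sqrt_pos.2 (hq y); positivity
  simp only [smul_eq_mul]
  rw [Real.sqrt_lt' hpos]
  change q (μ * x + ν * y) < _
  rw [hsplit]
  nlinarith [mul_pos hμ hν, Real.sq_sqrt (hq x).le, Real.sq_sqrt (hq y).le]

/-- For every `r ∈ (0, 1)`, the point `(r, f(r), 0)` with
`f(r) = 4 - 3r - √(9r² - 15r + 7)` is an extreme point of the Okounkov body
`Δ = {(r, t, y) : 0 ≤ r ≤ 1, 0 ≤ t ≤ f(r), 0 ≤ y ≤ 24 - 18r - 6t}`. -/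
theorem Delta_graph_points_extreme (r : ℝ) (hr0 : 0 < r) (hr1 : r < 1) :
    (r, 4 - 3 * r - Real.sqrt (9 * r ^ 2 - 15 * r + 7), (0 : ℝ)) ∈
      Set.extremePoints ℝ {p : ℝ × ℝ × ℝ | 0 ≤ p.1 ∧ p.1 ≤ 1 ∧ 0 ≤ p.2.1 ∧
        p.2.1 ≤ 4 - 3 * p.1 - Real.sqrt (9 * p.1 ^ 2 - 15 * p.1 + 7) ∧
        0 ≤ p.2.2 ∧ p.2.2 ≤ 24 - 18 * p.1 - 6 * p.2.1} := by
  set f : ℝ → ℝ := fun x ↦ 4 - 3 * x - √(9 * x ^ 2 - 15 * x + 7)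
  have hg : StrictConvexOn ℝ univ fun x : ℝ ↦ √(9 * x ^ 2 - 15 * x + 7) := by
    simpa only [neg_mul, ← sub_eq_add_neg] using
      strictConvexOn_sqrt_quadratic (a := 9) (b := -15) (c := 7) (by norm_num) (by norm_num)
  have hf : StrictConcaveOn ℝ univ f :=
    ((concaveOn_const 4 convex_univ).sub
      ((convexOn_id convex_univ).smul zero_le_three)).sub_strictConvexOn hg
  let e := LinearEquiv.prodAssoc ℝ ℝ ℝ ℝ
  set H := {p : ℝ × ℝ | p.1 ∈ univ ∧ p.2 ≤ f p.1}
  have hext : (r, f r, (0 : ℝ)) ∈ extremePoints ℝ (e '' (H ×ˢ Ici 0)) := by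
    rw [← image_extremePoints, extremePoints_prod]
    exact ⟨((r, f r), 0),
      ⟨hf.mk_mem_extremePoints_hypograph (mem_univ r), self_mem_extremePoints_Ici 0⟩, rfl⟩
  refine inter_extremePoints_subset_extremePoints_of_subset ?_ ⟨?_, hext⟩
  · rintro ⟨x, t, y⟩ ⟨-, -, -, ht, hy, -⟩
    exact ⟨((x, t), y), ⟨⟨mem_univ x, ht⟩, hy⟩, rfl⟩
  · have hf_le : f r ≤ 4 - 3 * r := sub_le_self _ (Real.sqrt_nonneg _)
    have hf_nonneg : 0 ≤ f r :=
      sub_nonneg.2 (Real.sqrt_le_iff.2 ⟨by linarith, by nlinarith⟩)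
    exact ⟨hr0.le, hr1.le, hf_nonneg, le_rfl, le_rfl, by linarith⟩
end

section
/- Let L = {(x, y, z) ∈ ℝ³ : 0 ≤ x and y² + z² ≤ x²} (the Lorentz cone), let a ∈ ℝ³, and let S = {v ∈ L : a₁v₁ + a₂v₂ + a₃v₃ = 1}. If S is compact and contains a point in the topological interior of L, then S is not the convex hull of any finite subset of ℝ³. -/
/-!
Write `ℓ = pairing a`, `B = minkowski` and `Q(v) = B(v, v) = x² - y² - z²`. For `v, w` in the cone,
`B(v, w) ≥ 0` (reverse Cauchy–Schwarz), so if a point of `S` with `Q = 0` is a proper convex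
combination of `v, w ∈ S`, expanding `Q` forces `Q(v) = Q(w) = B(v, w) = 0`, whence `v` and
`w` are proportional and, lying on `ℓ = 1`, equal. Thus every point of the conic
`S ∩ {Q = 0}` is an extreme point of `S`. Boundedness of `S` makes `ℓ` positive on every ray
`(1, cos θ, sin θ)` of `∂L`, so this conic contains infinitely many points; but the extreme
points of the convex hull of `F` lie in `F`.
-/

open Set

def lorentzCone : Set (ℝ × ℝ × ℝ) := {v | 0 ≤ v.1 ∧ v.2.1 ^ 2 + v.2.2 ^ 2 ≤ v.1 ^ 2}

def minkowski (v w : ℝ × ℝ × ℝ) : ℝ := v.1 * w.1 - v.2.1 * w.2.1 - v.2.2 * w.2.2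

def pairing (a v : ℝ × ℝ × ℝ) : ℝ := a.1 * v.1 + a.2.1 * v.2.1 + a.2.2 * v.2.2

def lorentzSlice (a : ℝ × ℝ × ℝ) : Set (ℝ × ℝ × ℝ) := {v ∈ lorentzCone | pairing a v = 1}

noncomputable def lorentzRay (θ : ℝ) : ℝ × ℝ × ℝ := (1, Real.cos θ, Real.sin θ)

lemma pairing_add (a v w : ℝ × ℝ × ℝ) : pairing a (v + w) = pairing a v + pairing a w := by
  simp only [pairing, Prod.fst_add, Prod.snd_add]
  ring

lemma pairing_smul (a v : ℝ × ℝ × ℝ) (c : ℝ) : pairing a (c • v) = c * pairing a v := by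
  simp only [pairing, Prod.smul_fst, Prod.smul_snd, smul_eq_mul]
  ring

lemma minkowski_self (v : ℝ × ℝ × ℝ) :
    minkowski v v = v.1 ^ 2 - (v.2.1 ^ 2 + v.2.2 ^ 2) := by
  simp only [minkowski]
  ring

lemma mem_lorentzCone_iff {v : ℝ × ℝ × ℝ} :
    v ∈ lorentzCone ↔ 0 ≤ v.1 ∧ 0 ≤ minkowski v v := by
  rw [minkowski_self, sub_nonneg]
  rfl

lemma minkowski_smul_add_smul (s t : ℝ) (v w : ℝ × ℝ × ℝ) :
    minkowski (s • v + t • w) (s • v + t • w) =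
      s ^ 2 * minkowski v v + t ^ 2 * minkowski w w + 2 * s * t * minkowski v w := by
  simp only [minkowski, Prod.fst_add, Prod.snd_add, Prod.smul_fst, Prod.smul_snd, smul_eq_mul]
  ring

lemma minkowski_smul_self (c : ℝ) (v : ℝ × ℝ × ℝ) :
    minkowski (c • v) (c • v) = c ^ 2 * minkowski v v := by
  simp only [minkowski, Prod.smul_fst, Prod.smul_snd, smul_eq_mul]
  ring

lemma minkowski_nonneg_of_mem {v w : ℝ × ℝ × ℝ} (hv : v ∈ lorentzCone)
    (hw : w ∈ lorentzCone) : 0 ≤ minkowski v w := by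
  obtain ⟨hv1, hv⟩ := hv
  obtain ⟨hw1, hw⟩ := hw
  have hprod : (v.2.1 ^ 2 + v.2.2 ^ 2) * (w.2.1 ^ 2 + w.2.2 ^ 2) ≤ v.1 ^ 2 * w.1 ^ 2 :=
    mul_le_mul hv hw (by positivity) (sq_nonneg _)
  simp only [minkowski]
  nlinarith [sq_nonneg (v.2.1 * w.2.2 - v.2.2 * w.2.1), mul_nonneg hv1 hw1,
    sq_nonneg (v.2.1 * w.2.1 + v.2.2 * w.2.2)]

lemma lorentzCone.smul_add_smul_mem {s t : ℝ} {v w : ℝ × ℝ × ℝ} (hs : 0 ≤ s) (ht : 0 ≤ t)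
    (hv : v ∈ lorentzCone) (hw : w ∈ lorentzCone) : s • v + t • w ∈ lorentzCone := by
  have hvw := minkowski_nonneg_of_mem hv hw
  rw [mem_lorentzCone_iff] at hv hw ⊢
  refine ⟨?_, ?_⟩
  · simp only [Prod.fst_add, Prod.smul_fst, smul_eq_mul]
    exact add_nonneg (mul_nonneg hs hv.1) (mul_nonneg ht hw.1)
  · rw [minkowski_smul_add_smul]
    exact add_nonneg (add_nonneg (mul_nonneg (sq_nonneg s) hv.2) (mul_nonneg (sq_nonneg t) hw.2))
      (mul_nonneg (by positivity) hvw)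

lemma eq_zero_of_fst_eq_zero_of_minkowski_nonneg {u : ℝ × ℝ × ℝ} (h1 : u.1 = 0)
    (hQ : 0 ≤ minkowski u u) : u = 0 := by
  rw [minkowski_self, h1] at hQ
  have h2 : u.2.1 = 0 := by nlinarith [sq_nonneg u.2.1, sq_nonneg u.2.2]
  have h3 : u.2.2 = 0 := by nlinarith [sq_nonneg u.2.1, sq_nonneg u.2.2]
  exact Prod.ext h1 (Prod.ext h2 h3)

lemma smul_eq_smul_of_minkowski_eq_zero {v w : ℝ × ℝ × ℝ} (hv : minkowski v v = 0)
    (hw : minkowski w w = 0) (hvw : minkowski v w = 0) : w.1 • v = v.1 • w := by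
  rw [← sub_eq_zero, sub_eq_add_neg, ← neg_smul]
  refine eq_zero_of_fst_eq_zero_of_minkowski_nonneg ?_ ?_
  · simp only [Prod.fst_add, Prod.smul_fst, smul_eq_mul]
    ring
  · rw [minkowski_smul_add_smul, hv, hw, hvw]
    simp

lemma mem_extremePoints_lorentzSlice {a v : ℝ × ℝ × ℝ} (hv : v ∈ lorentzSlice a)
    (hQ : minkowski v v = 0) : v ∈ (lorentzSlice a).extremePoints ℝ := by
  refine ⟨hv, fun x hx y hy hxy => ?_⟩
  obtain ⟨α, β, hα, hβ, hαβ, rfl⟩ := hxy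
  have hQx := mul_nonneg (sq_nonneg α) (mem_lorentzCone_iff.1 hx.1).2
  have hQy := mul_nonneg (sq_nonneg β) (mem_lorentzCone_iff.1 hy.1).2
  have hBxy := mul_nonneg (by positivity : (0 : ℝ) ≤ 2 * α * β) (minkowski_nonneg_of_mem hx.1 hy.1)
  rw [minkowski_smul_add_smul] at hQ
  obtain ⟨hQxy, hB⟩ := (add_eq_zero_iff_of_nonneg (add_nonneg hQx hQy) hBxy).1 hQ
  obtain ⟨hQx, hQy⟩ := (add_eq_zero_iff_of_nonneg hQx hQy).1 hQxy
  have hprop := smul_eq_smul_of_minkowski_eq_zero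
    ((mul_eq_zero.1 hQx).resolve_left (by positivity))
    ((mul_eq_zero.1 hQy).resolve_left (by positivity))
    ((mul_eq_zero.1 hB).resolve_left (by positivity))
  have hfst : y.1 = x.1 := by
    simpa only [pairing_smul, hx.2, hy.2, mul_one] using congrArg (pairing a) hprop
  have hx1 : x.1 ≠ 0 := by
    intro h
    have hx0 := eq_zero_of_fst_eq_zero_of_minkowski_nonneg h (mem_lorentzCone_iff.1 hx.1).2
    have := hx.2
    simp [hx0, pairing] at this
  rw [hfst] at hprop
  obtain rfl : x = y := smul_right_injective _ hx1 hprop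
  rw [← add_smul, hαβ, one_smul]

lemma pairing_pos_of_isBounded {a p w : ℝ × ℝ × ℝ}
    (hS : Bornology.IsBounded (lorentzSlice a)) (hp : p ∈ lorentzSlice a)
    (hw : w ∈ lorentzCone) (hw1 : 0 < w.1) : 0 < pairing a w := by
  obtain ⟨R, hR⟩ := isBounded_iff_forall_norm_le.1 hS
  by_contra! hc
  obtain ⟨t, ht, htR⟩ : ∃ t : ℝ, 0 ≤ t ∧ R < t * w.1 :=
    ⟨(|R| + 1) / w.1, by positivity, by rw [div_mul_cancel₀ _ hw1.ne']; linarith [le_abs_self R]⟩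
  -- the slice contains the half-line through `p` in the direction `w - ℓ(w) • p`
  set u := (1 - t * pairing a w) • p + t • w
  have hs : 0 ≤ 1 - t * pairing a w := by nlinarith
  have hu : u ∈ lorentzSlice a := by
    refine ⟨lorentzCone.smul_add_smul_mem hs ht hp.1 hw, ?_⟩
    rw [pairing_add, pairing_smul, pairing_smul, hp.2]
    ring
  have hu1 : t * w.1 ≤ u.1 := by
    simp only [u, Prod.fst_add, Prod.smul_fst, smul_eq_mul]
    nlinarith [hp.1.1]
  have huR : u.1 ≤ R := (le_abs_self u.1).trans ((norm_fst_le u).trans (hR u hu))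
  linarith

lemma lorentzRay_mem (θ : ℝ) : lorentzRay θ ∈ lorentzCone := by
  simp [lorentzRay, lorentzCone]

lemma minkowski_lorentzRay (θ : ℝ) : minkowski (lorentzRay θ) (lorentzRay θ) = 0 := by
  simp only [minkowski_self, lorentzRay, Real.cos_sq_add_sin_sq]
  norm_num

lemma inv_pairing_smul_mem_lorentzSlice {a w : ℝ × ℝ × ℝ} (hw : w ∈ lorentzCone)
    (h : 0 < pairing a w) : (pairing a w)⁻¹ • w ∈ lorentzSlice a := by
  refine ⟨?_, ?_⟩
  · simpa using lorentzCone.smul_add_smul_mem (inv_pos.2 h).le le_rfl hw hw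
  · rw [pairing_smul, inv_mul_cancel₀ h.ne']

lemma smul_lorentzRay_injOn {f : ℝ → ℝ} (hf : ∀ θ, f θ ≠ 0) :
    InjOn (fun θ => f θ • lorentzRay θ) (Icc 0 Real.pi) := by
  intro θ hθ θ' hθ' h
  have h1 := congrArg Prod.fst h
  have h2 := congrArg (fun v => v.2.1) h
  simp only [lorentzRay, Prod.smul_mk, smul_eq_mul, mul_one] at h1 h2
  rw [h1] at h2
  exact Real.injOn_cos hθ hθ' (mul_left_cancel₀ (hf θ') h2)

/-- A compact affine slice `S = {v ∈ L : a·v = 1}` of the Lorentz cone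
`L = {(x, y, z) : 0 ≤ x, y² + z² ≤ x²}` that contains a point of the topological
interior of `L` is not the convex hull of any finite subset of `ℝ³`.  This is the
convex-geometric mechanism behind the second non-polyhedral Okounkov body. -/
theorem lorentz_slice_not_polyhedral (a : ℝ × ℝ × ℝ)
    (L : Set (ℝ × ℝ × ℝ)) (hL : L = {v | 0 ≤ v.1 ∧ v.2.1 ^ 2 + v.2.2 ^ 2 ≤ v.1 ^ 2})
    (S : Set (ℝ × ℝ × ℝ))
    (hS : S = {v ∈ L | a.1 * v.1 + a.2.1 * v.2.1 + a.2.2 * v.2.2 = 1})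
    (hcomp : IsCompact S) (hint : ∃ p ∈ S, p ∈ interior L) :
    ∀ F : Set (ℝ × ℝ × ℝ), F.Finite → S ≠ convexHull ℝ F := by
  intro F hF hSF
  obtain ⟨p, hp, -⟩ := hint
  have hSa : S = lorentzSlice a := by rw [hS, hL]; rfl
  subst hSa
  have hpos : ∀ θ, 0 < pairing a (lorentzRay θ) := fun θ =>
    pairing_pos_of_isBounded hcomp.isBounded hp (lorentzRay_mem θ) one_pos
  have hsub : (fun θ => (pairing a (lorentzRay θ))⁻¹ • lorentzRay θ) '' Icc 0 Real.pi ⊆ F := by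
    rintro _ ⟨θ, -, rfl⟩
    apply extremePoints_convexHull_subset (𝕜 := ℝ)
    rw [← hSF]
    refine mem_extremePoints_lorentzSlice
      (inv_pairing_smul_mem_lorentzSlice (lorentzRay_mem θ) (hpos θ)) ?_
    rw [minkowski_smul_self, minkowski_lorentzRay, mul_zero]
  exact ((Icc_infinite Real.pi_pos).image
    (smul_lorentzRay_injOn fun θ => (inv_pos.2 (hpos θ)).ne')) (hF.subset hsub)
end
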